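/- Define w₁₃(x) = (−x + i√(1−x²))/(2i√(1−x²)) for x ∈ D₁ = ℂ \ ((−∞,−1] ∪ [1,∞)), using the principal square root (note 1−x² ∉ (−∞,0] on D₁). Then w₁₃ is a conformal map from D₁ onto ℂ \ ((−∞,0] ∪ [1,∞)). -/

import Mathlib

/-- The doubly slit plane `ℂ \ ((−∞,−1] ∪ [1,∞))`. -/
def domD1 : Set ℂ := {z : ℂ | z.im = 0 ∧ (z.re ≤ -1 ∨ 1 ≤ z.re)}ᶜ

/-- Principal square root of `1 - x²`. -/
noncomputable def sqrt1mx2 (x : ℂ) : ℂ := (1 - x ^ 2) ^ ((1 : ℂ) / 2)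

/-- The map `w₁₃`. -/
noncomputable def w13 (x : ℂ) : ℂ :=
  (-x + Complex.I * sqrt1mx2 x) / (2 * Complex.I * sqrt1mx2 x)

/-!
Write `g_c x = x / √(1 - c x²)`; then `w13 = (1 + i g_1) / 2` on `D₁`, and `x ∈ D₁` iff
`1 - x² ∈ slitPlane`. The identity `1 + c (g_c x)² = (1 - c x²)⁻¹`, together with
`√(z⁻¹) = (√z)⁻¹` on the slit plane, shows that `g_{-c}` inverts `g_c`, so `g_c` is a holomorphic
bijection from `{1 - c x² ∈ slitPlane}` onto `{1 + c y² ∈ slitPlane}`. Finally the affine map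
`y ↦ (1 + i y) / 2` carries `{1 + y² ∈ slitPlane}` onto `{w | 1 - 2w ∈ D₁}`, which is the target.
-/

open Complex Set

namespace Complex

lemma sqrt_sq (z : ℂ) : sqrt z ^ 2 = z :=
  cpow_ofNat_inv_pow z 2

lemma sqrt_ne_zero {z : ℂ} (hz : z ≠ 0) : sqrt z ≠ 0 := by
  contrapose! hz
  rw [← sqrt_sq z, hz, zero_pow two_ne_zero]

lemma sqrt_inv {z : ℂ} (hz : z ∈ slitPlane) : sqrt z⁻¹ = (sqrt z)⁻¹ :=
  inv_cpow z _ (slitPlane_arg_ne_pi hz)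

lemma inv_mem_slitPlane {z : ℂ} (hz : z ∈ slitPlane) : z⁻¹ ∈ slitPlane := by
  rw [mem_slitPlane_iff_arg] at hz ⊢
  refine ⟨?_, inv_ne_zero hz.2⟩
  rw [arg_inv, if_neg hz.1]
  intro h
  linarith [neg_pi_lt_arg z]

lemma one_sub_sq_mem_slitPlane_iff {z : ℂ} :
    1 - z ^ 2 ∈ slitPlane ↔ ¬(z.im = 0 ∧ (z.re ≤ -1 ∨ 1 ≤ z.re)) := by
  simp only [mem_slitPlane_iff, sub_re, sub_im, one_re, one_im, pow_two, mul_re, mul_im]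
  constructor
  · rintro h ⟨him, hre⟩
    simp only [him, mul_zero, zero_mul, add_zero, sub_zero, sub_self, ne_eq, not_true_eq_false,
      or_false] at h
    rcases hre with hre | hre <;> nlinarith
  · intro h
    by_cases him : z.im = 0
    · have hre : -1 < z.re ∧ z.re < 1 := by
        simpa [him, not_or, not_le] using h
      left; nlinarith
    · by_cases hre : z.re = 0
      · left; simp only [hre, mul_zero, zero_sub]; nlinarith [mul_self_pos.2 him]
      · right; intro h0; apply mul_ne_zero hre him; linarith

end Complex

noncomputable def divSqrtOneSubMulSq (c x : ℂ) : ℂ := x / sqrt (1 - c * x ^ 2)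

section divSqrtOneSubMulSq

variable {c x : ℂ}

lemma one_sub_neg_mul_divSqrtOneSubMulSq_sq (hx : 1 - c * x ^ 2 ∈ slitPlane) :
    1 - -c * divSqrtOneSubMulSq c x ^ 2 = (1 - c * x ^ 2)⁻¹ := by
  have hx0 := slitPlane_ne_zero hx
  rw [divSqrtOneSubMulSq, div_pow, sqrt_sq]
  field_simp
  ring

lemma divSqrtOneSubMulSq_neg_divSqrtOneSubMulSq (hx : 1 - c * x ^ 2 ∈ slitPlane) :
    divSqrtOneSubMulSq (-c) (divSqrtOneSubMulSq c x) = x := by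
  rw [divSqrtOneSubMulSq, one_sub_neg_mul_divSqrtOneSubMulSq_sq hx, sqrt_inv hx,
    divSqrtOneSubMulSq, div_inv_eq_mul, div_mul_cancel₀ _ (sqrt_ne_zero (slitPlane_ne_zero hx))]

variable (c)

lemma bijOn_divSqrtOneSubMulSq :
    BijOn (divSqrtOneSubMulSq c) {x | 1 - c * x ^ 2 ∈ slitPlane}
      {y | 1 - -c * y ^ 2 ∈ slitPlane} := by
  refine InvOn.bijOn ⟨fun x hx ↦ divSqrtOneSubMulSq_neg_divSqrtOneSubMulSq hx, fun y hy ↦ ?_⟩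
    (fun x hx ↦ ?_) (fun y hy ↦ ?_)
  · simpa using divSqrtOneSubMulSq_neg_divSqrtOneSubMulSq (c := -c) hy
  · rw [mem_ofPred_eq, one_sub_neg_mul_divSqrtOneSubMulSq_sq hx]
    exact inv_mem_slitPlane hx
  · have hy' := one_sub_neg_mul_divSqrtOneSubMulSq_sq (c := -c) hy
    rw [neg_neg] at hy'
    rw [mem_ofPred_eq, hy']
    exact inv_mem_slitPlane hy

lemma differentiableOn_divSqrtOneSubMulSq :
    DifferentiableOn ℂ (divSqrtOneSubMulSq c) {x | 1 - c * x ^ 2 ∈ slitPlane} := by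
  intro x hx
  have hsqrt : sqrt (1 - c * x ^ 2) ≠ 0 := sqrt_ne_zero (slitPlane_ne_zero hx)
  apply DifferentiableAt.differentiableWithinAt
  unfold divSqrtOneSubMulSq
  fun_prop (disch := assumption)

lemma bijOn_half_one_add_I_mul :
    BijOn (fun y ↦ (1 + I * y) / 2) {y | 1 - -c * y ^ 2 ∈ slitPlane}
      {w | 1 - c * (1 - 2 * w) ^ 2 ∈ slitPlane} := by
  refine InvOn.bijOn (f' := fun w ↦ I * (1 - 2 * w)) ⟨fun y _ ↦ ?_, fun w _ ↦ ?_⟩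
    (fun y hy ↦ ?_) (fun w hw ↦ ?_)
  · linear_combination (-y) * I_sq
  · linear_combination ((1 - 2 * w) / 2) * I_sq
  · rw [mem_ofPred_eq] at hy ⊢
    convert hy using 2
    linear_combination (c * y ^ 2) * I_sq
  · rw [mem_ofPred_eq] at hw ⊢
    convert hw using 2
    linear_combination (-c * (1 - 2 * w) ^ 2) * I_sq

end divSqrtOneSubMulSq

lemma domD1_eq : domD1 = {x | 1 - 1 * x ^ 2 ∈ slitPlane} := by
  ext x
  simp [domD1, one_sub_sq_mem_slitPlane_iff]

lemma preimage_one_sub_two_mul_domD1 :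
    (fun w : ℂ ↦ 1 - 2 * w) ⁻¹' domD1 = {w : ℂ | w.im = 0 ∧ (w.re ≤ 0 ∨ 1 ≤ w.re)}ᶜ := by
  ext w
  simp only [domD1, mem_preimage, mem_compl_iff, mem_ofPred_eq, sub_re, sub_im, one_re, one_im,
    mul_re, mul_im, re_ofNat, im_ofNat]
  refine not_congr (and_congr (by constructor <;> intro h <;> linarith) ?_)
  rw [or_comm]
  exact or_congr (by constructor <;> intro h <;> linarith) (by constructor <;> intro h <;> linarith)

lemma w13_eq {x : ℂ} (hx : 1 - 1 * x ^ 2 ∈ slitPlane) :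
    w13 x = (1 + I * divSqrtOneSubMulSq 1 x) / 2 := by
  have hs := sqrt_ne_zero (slitPlane_ne_zero hx)
  rw [one_mul] at hs
  rw [w13, sqrt1mx2, divSqrtOneSubMulSq, one_mul, one_div, ← sqrt]
  field_simp
  linear_combination (-x) * I_sq

theorem w13_conformal :
    DifferentiableOn ℂ w13 domD1 ∧
    Set.InjOn w13 domD1 ∧
    w13 '' domD1 = {w : ℂ | w.im = 0 ∧ (w.re ≤ 0 ∨ 1 ≤ w.re)}ᶜ := by
  rw [← preimage_one_sub_two_mul_domD1, domD1_eq]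
  have hw : EqOn ((fun y ↦ (1 + I * y) / 2) ∘ divSqrtOneSubMulSq 1) w13
      {x | 1 - 1 * x ^ 2 ∈ slitPlane} :=
    fun x hx ↦ (w13_eq hx).symm
  have hbij := ((bijOn_half_one_add_I_mul 1).comp (bijOn_divSqrtOneSubMulSq 1)).congr hw
  have hdiff := (differentiableOn_divSqrtOneSubMulSq 1).const_mul I |>.const_add 1 |>.div_const 2
  exact ⟨hdiff.congr hw.symm, hbij.injOn, hbij.image_eq⟩
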